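/- arXiv:2002.00263 — 2 statements merged into one kernel-verified Lean document; each statement's English description precedes it below -/
import Mathlib

section
/- Let Q be a finite set of edges with positive weight function w, let S ⊆ Q with |S| ≥ 2, and let e be an edge not in Q. Define λ(e) = (w(S) - w(e))/(|S| - 1). If w(Q)/|Q| ≥ λ(e), then the set Q' = (Q \ S) ∪ {e} satisfies w(Q')/|Q'| ≥ w(Q)/|Q|. -/
/-! Passing from `Q` to `(Q \ S) ∪ {e}` removes, in net, a block of `|S| - 1` elements of total
weight `w(S) - w(e)`, i.e. of average `λ(e)`. Removing a block whose average is at most the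
overall average cannot lower the average of what remains. -/

open Finset

theorem div_le_sub_div_sub_of_div_le {W D q k : ℝ} (hk : 0 < k) (hkq : k < q)
    (h : D / k ≤ W / q) : W / q ≤ (W - D) / (q - k) := by
  rw [div_le_div_iff₀ hk (hk.trans hkq)] at h
  rw [div_le_div_iff₀ (hk.trans hkq) (sub_pos.mpr hkq)]
  linarith

theorem Finset.sum_sdiff_union_singleton {α β : Type*} [DecidableEq α] [AddCommGroup β]
    (f : α → β) {Q S : Finset α} {e : α} (hS : S ⊆ Q) (he : e ∉ Q) :
    ∑ x ∈ (Q \ S) ∪ {e}, f x = ∑ x ∈ Q, f x - ∑ x ∈ S, f x + f e := by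
  have hdisj : Disjoint (Q \ S) {e} :=
    disjoint_singleton_right.mpr fun h => he (mem_sdiff.mp h).1
  rw [sum_union hdisj, sum_sdiff_eq_sub hS, sum_singleton]

theorem internal_avg_ge_general {α : Type*} [DecidableEq α] (w : α → ℝ)
    (Q S : Finset α) (hS : S ⊆ Q) (hScard : 2 ≤ S.card)
    (e : α) (he : e ∉ Q)
    (hlam : (∑ x ∈ Q, w x) / (Q.card : ℝ) ≥ ((∑ x ∈ S, w x) - w e) / ((S.card : ℝ) - 1)) :
    (∑ x ∈ ((Q \ S) ∪ {e}), w x) / (((Q \ S) ∪ {e}).card : ℝ)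
      ≥ (∑ x ∈ Q, w x) / (Q.card : ℝ) := by
  have hs : (1 : ℝ) < S.card := by exact_mod_cast hScard
  have hsq : (S.card : ℝ) ≤ Q.card := by exact_mod_cast card_le_card hS
  have hcard : (((Q \ S) ∪ {e}).card : ℝ) = Q.card - S.card + 1 := by
    simp only [cast_card, sum_sdiff_union_singleton _ hS he]
  rw [sum_sdiff_union_singleton w hS he, hcard]
  have := div_le_sub_div_sub_of_div_le (sub_pos.mpr hs) (by linarith) hlam
  convert this using 2 <;> ring

/-- Combinatorial core of the internal-subtree lemma: if `S ⊆ Q` with `|S| ≥ 2`,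
`e ∉ Q`, and `w(Q)/|Q| ≥ λ(e) = (w(S) - w(e))/(|S| - 1)`, then
`Q' = (Q \ S) ∪ {e}` has average weight at least that of `Q`. -/
theorem internal_avg_ge {α : Type*} [DecidableEq α] (w : α → ℝ) (hw : ∀ x, 0 < w x)
    (Q S : Finset α) (hQne : Q.Nonempty) (hS : S ⊆ Q) (hScard : 2 ≤ S.card)
    (e : α) (he : e ∉ Q)
    (hlam : (∑ x ∈ Q, w x) / (Q.card : ℝ) ≥ ((∑ x ∈ S, w x) - w e) / ((S.card : ℝ) - 1)) :
    (∑ x ∈ ((Q \ S) ∪ {e}), w x) / (((Q \ S) ∪ {e}).card : ℝ)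
      ≥ (∑ x ∈ Q, w x) / (Q.card : ℝ) :=
  internal_avg_ge_general w Q S hS hScard e he hlam
end

section
/- Let T be a finite rooted tree with root v₀ and positive edge weights w, and let Q ≠ E⁺(v₀) be an edge cut separating v₀ from the leaves, with internal subtree H (the component of T − Q containing v₀). Let e be a leaf edge of H with |E⁺(e)| ≥ 2. Then at least one of the following holds: (i) λ(e) = (w(E⁺(e)) - w(e))/(|E⁺(e)| - 1) > w(Q)/|Q|, or (ii) the set Q' = (Q \ E⁺(e)) ∪ {e} is an edge cut separating v₀ from the leaves whose internal subtree H' satisfies |E(H')| < |E(H)|, and w(Q')/|Q'| ≥ w(Q)/|Q|. -/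
/-- A finite rooted tree, encoded by a parent function: every vertex other than the
root has a unique parent, edges are directed away from the root (from `parent v` to `v`),
and a rank function witnesses that every vertex is reachable from the root. -/
structure DiTree where
  V : Type
  [fin : Fintype V]
  [dec : DecidableEq V]
  root : V
  parent : V → V
  rank : V → ℕ
  parent_root : parent root = root
  rank_lt : ∀ v, v ≠ root → rank (parent v) < rank v

namespace DiTree

variable (T : DiTree)

instance : Fintype T.V := T.fin
instance : DecidableEq T.V := T.dec

/-- Edges of `T` are identified with their head vertices: the edge corresponding to a
non-root vertex `v` is the edge from `parent v` to `v`. -/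
def IsEdge (v : T.V) : Prop := v ≠ T.root

/-- The edge set of `T`. -/
def edges : Finset T.V := Finset.univ.filter fun v => v ≠ T.root

/-- The set of children of `v`, i.e. the heads of the out-edges `E⁺(v)`.
For an edge `e` this is also the set `E⁺(e)` of out-edges of the head of `e`. -/
def children (v : T.V) : Finset T.V :=
  Finset.univ.filter fun u => T.parent u = v ∧ u ≠ T.root

/-- A leaf is a vertex with no out-edges. -/
def IsLeaf (v : T.V) : Prop := T.children v = ∅

/-- `Q` is an edge cut separating the root from the set of leaves: it is a set of
edges meeting every directed path from the root to a leaf. -/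
def IsCut (Q : Finset T.V) : Prop :=
  (∀ v ∈ Q, v ≠ T.root) ∧
  ∀ l : T.V, T.IsLeaf l → l ≠ T.root → ∃ n : ℕ, T.parent^[n] l ∈ Q

/-- Average weight `w(X)/|X|` of an edge set `X`. -/
noncomputable def avg (w : T.V → ℝ) (X : Finset T.V) : ℝ := (∑ v ∈ X, w v) / (X.card : ℝ)

/-- The edge set of the internal subtree `H` of a cut `Q`: the edges of the component
of `T - Q` containing the root (an edge lies in `H` iff neither it nor any of its
ancestor edges belongs to `Q`). -/
noncomputable def internalEdges (Q : Finset T.V) : Finset T.V :=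
  letI := Classical.decPred fun v : T.V => v ≠ T.root ∧ ∀ n : ℕ, T.parent^[n] v ∉ Q
  Finset.univ.filter fun v => v ≠ T.root ∧ ∀ n : ℕ, T.parent^[n] v ∉ Q

/-- `e` is a leaf edge of the internal subtree of the cut `Q`: an edge of the internal
subtree whose head has no out-edge inside the internal subtree. -/
noncomputable def IsLeafEdgeOf (Q : Finset T.V) (e : T.V) : Prop :=
  e ∈ T.internalEdges Q ∧ ∀ u ∈ T.children e, u ∉ T.internalEdges Q

/-- Contractibility `λ(e) = (w(E⁺(e)) - w(e)) / (|E⁺(e)| - 1)` of an edge `e`. -/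
noncomputable def lam (w : T.V → ℝ) (e : T.V) : ℝ :=
  ((∑ v ∈ T.children e, w v) - w e) / (((T.children e).card : ℝ) - 1)

/-- `α₀ = w(E⁺(v₀)) / |E⁺(v₀)|`, the average weight of the out-edges of the root. -/
noncomputable def alpha0 (w : T.V → ℝ) : ℝ := T.avg w (T.children T.root)

end DiTree

/-! Any ancestor path through an edge of `E⁺(e)` reaches `e` one step later, so
`Q' = (Q \ E⁺(e)) ∪ {e}` is again a cut, and its internal subtree loses at least `e`. Passing
from `Q` to `Q'` removes `|E⁺(e)|` edges and adds one, changing the total weight by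
`-(w(E⁺(e)) - w(e))`; when `λ(e)` is at most the mean of `Q`, this loss is at most
`|E⁺(e)| - 1` times that mean, so the mean does not drop. -/

open Finset

theorem mean_le_mean_sdiff_union_singleton {α : Type*} [DecidableEq α] (w : α → ℝ)
    {Q S : Finset α} {e : α} (hSQ : S ⊆ Q) (heQ : e ∉ Q) (hS : 1 < #S)
    (hrate : ((∑ v ∈ S, w v) - w e) / ((#S : ℝ) - 1) ≤ (∑ v ∈ Q, w v) / #Q) :
    (∑ v ∈ Q, w v) / #Q ≤ (∑ v ∈ Q \ S ∪ {e}, w v) / #(Q \ S ∪ {e}) := by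
  have hdisj : Disjoint (Q \ S) {e} :=
    disjoint_singleton_right.mpr fun h => heQ (mem_sdiff.mp h).1
  have hsum : ∑ v ∈ Q \ S ∪ {e}, w v = (∑ v ∈ Q, w v) - (∑ v ∈ S, w v) + w e := by
    rw [sum_union hdisj, sum_singleton, sum_sdiff_eq_sub hSQ]
  have hcard : (#(Q \ S ∪ {e}) : ℝ) = #Q - #S + 1 := by
    rw [card_union_of_disjoint hdisj, card_sdiff_of_subset hSQ, card_singleton,
      Nat.cast_add, Nat.cast_sub (card_le_card hSQ), Nat.cast_one]
  have hk : (0 : ℝ) < #S - 1 := by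
    have : (1 : ℝ) < #S := by exact_mod_cast hS
    linarith
  have hq : (0 : ℝ) < #Q := by exact_mod_cast (zero_lt_one.trans hS).trans_le (card_le_card hSQ)
  have hq' : (0 : ℝ) < #(Q \ S ∪ {e}) := by exact_mod_cast card_pos.mpr ⟨e, by simp⟩
  have hrate' : ((∑ v ∈ S, w v) - w e) * #Q ≤ (∑ v ∈ Q, w v) * (#S - 1) := by
    rwa [div_le_div_iff₀ hk hq] at hrate
  rw [div_le_div_iff₀ hq hq', hsum, hcard]
  linarith

namespace DiTree

variable (T : DiTree)

theorem mem_children {u v : T.V} : u ∈ T.children v ↔ T.parent u = v ∧ u ≠ T.root := by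
  simp [children]

theorem mem_internalEdges {Q : Finset T.V} {v : T.V} :
    v ∈ T.internalEdges Q ↔ v ≠ T.root ∧ ∀ n : ℕ, T.parent^[n] v ∉ Q := by
  classical
  simp [internalEdges]

variable {T}

theorem notMem_of_mem_internalEdges {Q : Finset T.V} {v : T.V}
    (hv : v ∈ T.internalEdges Q) : v ∉ Q :=
  (T.mem_internalEdges.mp hv).2 0

theorem IsLeafEdgeOf.children_subset {Q : Finset T.V} {e : T.V} (he : T.IsLeafEdgeOf Q e) :
    T.children e ⊆ Q := by
  intro u hu
  obtain ⟨hpar, hu_root⟩ := T.mem_children.mp hu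
  obtain ⟨n, hn⟩ : ∃ n, T.parent^[n] u ∈ Q := by
    simpa [T.mem_internalEdges, hu_root] using he.2 u hu
  cases n with
  | zero => exact hn
  | succ m =>
    rw [Function.iterate_succ_apply, hpar] at hn
    exact absurd hn ((T.mem_internalEdges.mp he.1).2 m)

theorem exists_iterate_mem_sdiff_children_union {Q : Finset T.V} (e v : T.V)
    (h : ∃ n, T.parent^[n] v ∈ Q) : ∃ n, T.parent^[n] v ∈ Q \ T.children e ∪ {e} := by
  obtain ⟨n, hn⟩ := h
  by_cases hS : T.parent^[n] v ∈ T.children e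
  · refine ⟨n + 1, ?_⟩
    rw [Function.iterate_succ_apply', (T.mem_children.mp hS).1]
    exact mem_union_right _ (mem_singleton_self e)
  · exact ⟨n, mem_union_left _ (mem_sdiff.mpr ⟨hn, hS⟩)⟩

theorem IsCut.sdiff_children_union {Q : Finset T.V} {e : T.V} (hQ : T.IsCut Q)
    (he : e ≠ T.root) : T.IsCut (Q \ T.children e ∪ {e}) := by
  refine ⟨fun v hv => ?_, fun l hl hl_root =>
    exists_iterate_mem_sdiff_children_union e l (hQ.2 l hl hl_root)⟩
  rcases mem_union.mp hv with hv | hv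
  · exact hQ.1 v (mem_sdiff.mp hv).1
  · rwa [mem_singleton.mp hv]

theorem internalEdges_sdiff_children_union_ssubset {Q : Finset T.V} {e : T.V}
    (he : e ∈ T.internalEdges Q) :
    T.internalEdges (Q \ T.children e ∪ {e}) ⊂ T.internalEdges Q := by
  refine ssubset_of_subset_of_ne (fun v hv => ?_) fun h => ?_
  · obtain ⟨hv_root, hv_path⟩ := T.mem_internalEdges.mp hv
    refine T.mem_internalEdges.mpr ⟨hv_root, fun n hn => ?_⟩
    obtain ⟨m, hm⟩ := exists_iterate_mem_sdiff_children_union e v ⟨n, hn⟩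
    exact hv_path m hm
  · exact notMem_of_mem_internalEdges (h ▸ he) (mem_union_right _ (mem_singleton_self e))

end DiTree

theorem internal_subtree_lemma_general (T : DiTree) (w : T.V → ℝ)
    (Q : Finset T.V) (hQ : T.IsCut Q)
    (e : T.V) (he : T.IsLeafEdgeOf Q e) (hcard : 2 ≤ (T.children e).card) :
    T.lam w e > T.avg w Q ∨
      (T.IsCut ((Q \ T.children e) ∪ {e}) ∧
        (T.internalEdges ((Q \ T.children e) ∪ {e})).card < (T.internalEdges Q).card ∧
        T.avg w ((Q \ T.children e) ∪ {e}) ≥ T.avg w Q) := by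
  refine or_iff_not_imp_left.mpr fun hlam => ⟨?_, ?_, ?_⟩
  · exact hQ.sdiff_children_union (T.mem_internalEdges.mp he.1).1
  · exact card_lt_card (DiTree.internalEdges_sdiff_children_union_ssubset he.1)
  · exact mean_le_mean_sdiff_union_singleton w he.children_subset
      (DiTree.notMem_of_mem_internalEdges he.1) hcard (not_lt.mp hlam)

/-- Lemma 2: for a root-separating cut `Q ≠ E⁺(v₀)` and a leaf edge `e` of its internal
subtree with `|E⁺(e)| ≥ 2`, either (i) `λ(e) > w(Q)/|Q|`, or (ii)
`Q' = (Q \ E⁺(e)) ∪ {e}` is a root-separating cut with strictly smaller internal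
subtree and average weight at least that of `Q`. -/
theorem internal_subtree_lemma (T : DiTree) (w : T.V → ℝ) (hw : ∀ v, 0 < w v)
    (Q : Finset T.V) (hQ : T.IsCut Q) (hQne : Q.Nonempty) (hne : Q ≠ T.children T.root)
    (e : T.V) (he : T.IsLeafEdgeOf Q e) (hcard : 2 ≤ (T.children e).card) :
    T.lam w e > T.avg w Q ∨
      (T.IsCut ((Q \ T.children e) ∪ {e}) ∧
        (T.internalEdges ((Q \ T.children e) ∪ {e})).card < (T.internalEdges Q).card ∧
        T.avg w ((Q \ T.children e) ∪ {e}) ≥ T.avg w Q) :=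
  internal_subtree_lemma_general T w Q hQ e he hcard
end
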